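/- Let l < z < u. The extreme points of the convex hull of the single-breakpoint lifted set L([l,u]) ⊂ ℝ² are exactly L(l) = (l,0), L(z) = (z,0), and L(u) = (z, u−z). -/

import Mathlib

/-!
Away from its breakpoint `L` is affine on `[l, z]` and on `[z, u]`, so `L([l, u])` is the union of
the segments `[L l, L z]` and `[L z, L u]` and its convex hull is the triangle with these three
vertices. Each vertex is exposed: it is the unique maximiser over the triangle of `-d₁`, `d₁ - d₂`
and `d₂` respectively, and exposed points are extreme.
-/

open Set

section ExposedVertex

variable {𝕜 E : Type*} [Field 𝕜] [LinearOrder 𝕜] [IsStrictOrderedRing 𝕜] [TopologicalSpace 𝕜]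
  [AddCommGroup E] [Module 𝕜 E] [TopologicalSpace E]

theorem mem_exposedPoints_convexHull_insert {x : E} {t : Set E} (f : StrongDual 𝕜 E)
    (hf : ∀ y ∈ t, f y < f x) : x ∈ (convexHull 𝕜 (insert x t)).exposedPoints 𝕜 := by
  refine ⟨subset_convexHull 𝕜 _ (mem_insert x t), f, fun y hy => ⟨?_, fun hxy => ?_⟩⟩
  · have hsub : insert x t ⊆ {w | f w ≤ f x} := insert_subset le_rfl fun w hw => (hf w hw).le
    exact convexHull_min hsub (convex_halfSpace_le f.isLinear (f x)) hy
  · rcases t.eq_empty_or_nonempty with rfl | ht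
    · simpa using hy
    rw [convexHull_insert ht, mem_convexJoin] at hy
    obtain ⟨x', hx', q, hq, a, b, ha, hb, hab, rfl⟩ := hy
    rw [mem_singleton_iff.1 hx'] at hxy ⊢
    have hfq : f q < f x := convexHull_min hf (convex_halfSpace_lt f.isLinear (f x)) hq
    obtain rfl : b = 0 := by
      simp only [map_add, map_smul, smul_eq_mul] at hxy
      have hb0 : b * (f x - f q) ≤ 0 := by linear_combination hxy + f x * hab
      exact le_antisymm (nonpos_of_mul_nonpos_left hb0 (sub_pos.2 hfq)) hb
    obtain rfl : a = 1 := by simpa using hab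
    simp

end ExposedVertex

def breakpointLift (z d : ℝ) : ℝ × ℝ := (min d z, max (d - z) 0)

section BreakpointLift

variable {l z u d : ℝ}

theorem breakpointLift_of_le (h : d ≤ z) : breakpointLift z d = (d, 0) := by
  simp [breakpointLift, h]

theorem breakpointLift_of_ge (h : z ≤ d) : breakpointLift z d = (z, d - z) := by
  simp [breakpointLift, h]

theorem convexHull_image_breakpointLift (hlz : l ≤ z) (hzu : z ≤ u) :
    convexHull ℝ (breakpointLift z '' Icc l u) = convexHull ℝ {(l, 0), (z, 0), (z, u - z)} := by
  refine (convexHull_min ?_ (convex_convexHull ℝ _)).antisymm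
    (convexHull_min ?_ (convex_convexHull ℝ _))
  · rintro _ ⟨d, ⟨hld, hdu⟩, rfl⟩
    rcases le_total d z with h | h
    · rw [breakpointLift_of_le h]
      refine segment_subset_convexHull (mem_insert _ _) (mem_insert_of_mem _ (mem_insert _ _)) ?_
      rw [← Prod.image_mk_segment_left (𝕜 := ℝ), segment_eq_Icc hlz]
      exact ⟨d, ⟨hld, h⟩, rfl⟩
    · rw [breakpointLift_of_ge h]
      refine segment_subset_convexHull (mem_insert_of_mem _ (mem_insert _ _))
        (mem_insert_of_mem _ (mem_insert_of_mem _ (mem_singleton _))) ?_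
      rw [← Prod.image_mk_segment_right (𝕜 := ℝ), segment_eq_Icc (sub_nonneg.2 hzu)]
      exact ⟨d - z, ⟨sub_nonneg.2 h, sub_le_sub_right hdu z⟩, rfl⟩
  · refine (insert_subset ?_ (insert_subset ?_ (singleton_subset_iff.2 ?_))).trans
      (subset_convexHull ℝ _)
    · exact ⟨l, ⟨le_rfl, hlz.trans hzu⟩, breakpointLift_of_le hlz⟩
    · exact ⟨z, ⟨hlz, hzu⟩, breakpointLift_of_le le_rfl⟩
    · exact ⟨u, ⟨hlz.trans hzu, le_rfl⟩, breakpointLift_of_ge hzu⟩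

theorem extremePoints_convexHull_triangle (hlz : l < z) (hzu : z < u) :
    (convexHull ℝ {(l, 0), (z, 0), (z, u - z)} : Set (ℝ × ℝ)).extremePoints ℝ =
      {(l, 0), (z, 0), (z, u - z)} := by
  refine extremePoints_convexHull_subset.antisymm fun p hp => exposedPoints_subset_extremePoints ?_
  rcases hp with rfl | rfl | rfl
  · refine mem_exposedPoints_convexHull_insert (-ContinuousLinearMap.fst ℝ ℝ ℝ) ?_
    rintro y (rfl | rfl) <;> simp [hlz]
  · rw [insert_comm]
    refine mem_exposedPoints_convexHull_insert
      (ContinuousLinearMap.fst ℝ ℝ ℝ - ContinuousLinearMap.snd ℝ ℝ ℝ) ?_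
    rintro y (rfl | rfl) <;> simp [hlz, hzu]
  · rw [pair_comm, insert_comm]
    refine mem_exposedPoints_convexHull_insert (ContinuousLinearMap.snd ℝ ℝ ℝ) ?_
    rintro y (rfl | rfl) <;> simp [hzu]

end BreakpointLift

/-- The extreme points of the convex hull of the single-breakpoint lifted segment
are exactly `L(l) = (l,0)`, `L(z) = (z,0)` and `L(u) = (z, u−z)`. -/
theorem stmt_8 (l z u : ℝ) (hlz : l < z) (hzu : z < u) :
    Set.extremePoints ℝ
        (convexHull ℝ ((fun d : ℝ => (min d z, max (d - z) 0)) '' Set.Icc l u)) =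
      {(l, 0), (z, 0), (z, u - z)} := by
  change (convexHull ℝ (breakpointLift z '' Icc l u)).extremePoints ℝ = _
  rw [convexHull_image_breakpointLift hlz.le hzu.le, extremePoints_convexHull_triangle hlz hzu]
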